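/- arXiv:2505.18804 — 4 statements merged into one kernel-verified Lean document; each statement's English description precedes it below -/
import Mathlib

section
/- Let G be a group with a finite subset S, and let A be a finite subgroup of MulAut G. Form the semidirect product G ⋊ A with respect to the inclusion A →* MulAut G, so that (g₁, a₁)·(g₂, a₂) = (g₁ · a₁(g₂), a₁·a₂). Let T = {a(s) : s ∈ S, a ∈ A} ⊆ G and Σ = {(s, a) : s ∈ S, a ∈ A} ⊆ G ⋊ A, and let B⁺_Σ(r) denote the set of products of at most r elements of Σ in G ⋊ A. Then for every natural number r, the number of A-orbits in G that meet B⁺_T(r) is at most the cardinality of B⁺_Σ(r); that is, Nat.card (π '' B⁺_T(r)) ≤ Nat.card (B⁺_Σ(r)). -/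
variable {G : Type*} [Group G]

/-- `W T r`: the set of products of exactly `r` elements of `T` (with `W T 0 = {1}`). -/
def wordSet (T : Set G) (r : ℕ) : Set G :=
  {x | ∃ l : List G, l.length = r ∧ (∀ t ∈ l, t ∈ T) ∧ l.prod = x}

/-- The monoid ball `B⁺_T(r) = ⋃_{m=0}^{r} W_m(T)`. -/
def monoidBall (T : Set G) (r : ℕ) : Set G :=
  {x | ∃ l : List G, l.length ≤ r ∧ (∀ t ∈ l, t ∈ T) ∧ l.prod = x}

/-- The monoid sphere `S⁺_T(r) = B⁺_T(r) \ B⁺_T(r-1)`. -/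
def monoidSphere (T : Set G) (r : ℕ) : Set G := monoidBall T r \ monoidBall T (r - 1)

/-- `π : G → G/A`, sending `g` to its `A`-orbit `{a(g) : a ∈ A}`. -/
def orbitMap (A : Subgroup (MulAut G)) : G → Set G :=
  fun g => {x | ∃ a ∈ A, a g = x}

lemma monoidBall_finite (T : Set G) (hT : T.Finite) (r : ℕ) : (monoidBall T r).Finite := by
  induction r with
  | zero =>
    apply Set.Finite.subset (Set.finite_singleton 1)
    rintro x ⟨l, hl, -, rfl⟩
    simp only [Nat.le_zero, List.length_eq_zero_iff] at hl
    simp [hl]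
  | succ n ih =>
    apply Set.Finite.subset ((Set.finite_singleton 1).union (hT.mul ih))
    rintro x ⟨l, hl, hmem, rfl⟩
    cases l with
    | nil => simp
    | cons t l' =>
      right
      exact ⟨t, hmem t (by simp), l'.prod,
        ⟨l', by simpa using hl, fun u hu => hmem u (by simp [hu]), rfl⟩, (List.prod_cons).symm⟩

lemma key_lemma (S : Set G) (A : Subgroup (MulAut G)) :
    ∀ l : List G, (∀ t ∈ l, t ∈ {x | ∃ s ∈ S, ∃ a ∈ A, a s = x}) →
    ∃ (L : List (G ⋊[A.subtype] A)) (a : A),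
      L.length = l.length ∧
      (∀ x ∈ L, x ∈ {x : G ⋊[A.subtype] A | ∃ s ∈ S, ∃ a : A, x = ⟨s, a⟩}) ∧
      L.prod.left = (a : MulAut G) l.prod := by
  intro l
  induction l with
  | nil => exact fun _ => ⟨[], 1, rfl, by simp, by simp⟩
  | cons t l' ih =>
    intro hmem
    obtain ⟨L', a', hlen, hL'mem, hleft⟩ := ih (fun u hu => hmem u (by simp [hu]))
    obtain ⟨s, hs, b, hbA, hb⟩ := hmem t (by simp)
    set bA : A := ⟨b, hbA⟩
    refine ⟨⟨s, bA⁻¹ * a'⁻¹⟩ :: L', bA⁻¹, by simp [hlen], ?_, ?_⟩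
    · intro x hx
      rcases List.mem_cons.mp hx with rfl | hx
      · exact ⟨s, hs, bA⁻¹ * a'⁻¹, rfl⟩
      · exact hL'mem x hx
    · have : ((⟨s, bA⁻¹ * a'⁻¹⟩ : G ⋊[A.subtype] A) * L'.prod).left
          = s * (A.subtype (bA⁻¹ * a'⁻¹)) L'.prod.left := rfl
      rw [List.prod_cons, this, hleft, ← hb]
      show s * ((bA⁻¹ * a'⁻¹ : A) : MulAut G) (((a' : MulAut G)) l'.prod)
          = ((bA⁻¹ : A) : MulAut G) (b s * l'.prod)
      push_cast
      simp [bA, MulAut.mul_apply, map_mul]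

/-- The number of `A`-orbits in `G` meeting the monoid ball `B⁺_T(r)` is at most the
cardinality of the ball `B⁺_Σ(r)` in the semidirect product `G ⋊ A`. -/
theorem orbitCard_ball_le_semidirect_ball (S : Set G) (hSfin : S.Finite)
    (A : Subgroup (MulAut G)) (hAfin : Finite A) (r : ℕ) :
    Nat.card (orbitMap A '' monoidBall {x | ∃ s ∈ S, ∃ a ∈ A, a s = x} r) ≤
      Nat.card (monoidBall
        {x : G ⋊[A.subtype] A | ∃ s ∈ S, ∃ a : A, x = ⟨s, a⟩} r) := by
  set Sg : Set (G ⋊[A.subtype] A) := {x | ∃ s ∈ S, ∃ a : A, x = ⟨s, a⟩} with hSg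
  have hSgfin : Sg.Finite := by
    have : Sg ⊆ (fun p : G × A => (⟨p.1, p.2⟩ : G ⋊[A.subtype] A)) '' (S ×ˢ Set.univ) := by
      rintro x ⟨s, hs, a, rfl⟩
      exact ⟨(s, a), ⟨hs, trivial⟩, rfl⟩
    exact Set.Finite.subset (Set.Finite.image _ (hSfin.prod Set.finite_univ)) this
  have hballfin := monoidBall_finite Sg hSgfin r
  have hsub : orbitMap A '' monoidBall {x | ∃ s ∈ S, ∃ a ∈ A, a s = x} r ⊆
      (fun x : G ⋊[A.subtype] A => orbitMap A x.left) '' monoidBall Sg r := by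
    rintro O ⟨g, ⟨l, hlen, hmem, rfl⟩, rfl⟩
    obtain ⟨L, a, hLlen, hLmem, hleft⟩ := key_lemma S A l hmem
    refine ⟨L.prod, ⟨L, hLlen ▸ hlen, hLmem, rfl⟩, ?_⟩
    show orbitMap A L.prod.left = orbitMap A l.prod
    rw [hleft]
    ext x
    constructor
    · rintro ⟨c, hcA, rfl⟩
      exact ⟨c * (a : MulAut G), mul_mem hcA a.2, by simp⟩
    · rintro ⟨c, hcA, rfl⟩
      exact ⟨c * (a : MulAut G)⁻¹, mul_mem hcA (inv_mem a.2), by simp⟩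
  calc Nat.card (orbitMap A '' monoidBall {x | ∃ s ∈ S, ∃ a ∈ A, a s = x} r)
      ≤ Nat.card ((fun x : G ⋊[A.subtype] A => orbitMap A x.left) '' monoidBall Sg r) :=
        Nat.card_mono (hballfin.image _) hsub
    _ ≤ Nat.card (monoidBall Sg r) := Nat.card_image_le hballfin
end

section
/- Let G be a group, A a finite subgroup of Aut(G) with n = Nat.card A, and g, h ∈ G. Put T = {a(g) : a ∈ A} and ξ(r) = Nat.card (π '' (h · W_r(T))). If there exist real numbers c > 0 and λ > 1 such that Nat.card (S⁺_T(r)) ≥ c·λ^r for all r ≥ 1, then ξ(r) ≥ (c/n)·λ^r for all r ≥ 1; that is, exponential growth of the spheres of the submonoid generated by T forces the dynamic T_z on the coset group X = (G, A) to have exponential growth. -/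
variable {G : Type*} [Group G]

lemma wordSet_finite {T : Set G} (hT : T.Finite) : ∀ r, (wordSet T r).Finite := by
  intro r
  induction r with
  | zero =>
    apply Set.Finite.subset (Set.finite_singleton (1 : G))
    rintro x ⟨l, hl, _, hprod⟩
    rw [List.length_eq_zero_iff] at hl
    simp [hl.symm ▸ hprod.symm]
  | succ r ih =>
    apply Set.Finite.subset (Set.Finite.image2 (· * ·) hT ih)
    rintro x ⟨l, hl, hmem, hprod⟩
    cases l with
    | nil => simp at hl
    | cons a l' =>
      refine ⟨a, hmem a (by simp), l'.prod, ⟨l', by simpa using hl,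
        fun t ht => hmem t (by simp [ht]), rfl⟩, by simpa using hprod⟩

lemma sphere_subset_wordSet (T : Set G) (r : ℕ) (hr : 1 ≤ r) :
    monoidSphere T r ⊆ wordSet T r := by
  rintro x ⟨⟨l, hl, hmem, hprod⟩, hnot⟩
  refine ⟨l, ?_, hmem, hprod⟩
  by_contra hne
  exact hnot ⟨l, by omega, hmem, hprod⟩

/-- Exponential growth of the spheres of the submonoid generated by `T = {a(g) : a ∈ A}`
forces the dynamic `T_z` on the coset group `X = (G, A)` to have exponential growth. -/
theorem dynamic_exponential_growth_of_sphere (A : Subgroup (MulAut G)) (hAfin : Finite A)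
    (g h : G) (c lam : ℝ) (hc : 0 < c) (hlam : 1 < lam)
    (hexp : ∀ r : ℕ, 1 ≤ r →
      c * lam ^ r ≤ (Nat.card (monoidSphere {x | ∃ a ∈ A, a g = x} r) : ℝ)) :
    ∀ r : ℕ, 1 ≤ r →
      (c / (Nat.card A : ℝ)) * lam ^ r ≤
        (Nat.card (orbitMap A '' ((fun w => h * w) ''
          wordSet {x | ∃ a ∈ A, a g = x} r)) : ℝ) := by
  classical
  intro r hr
  set T : Set G := {x | ∃ a ∈ A, a g = x} with hT
  have hTfin : T.Finite := by
    have hsub : T ⊆ Set.range (fun a : A => (a : MulAut G) g) := by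
      rintro x ⟨a, ha, hax⟩; exact ⟨⟨a, ha⟩, hax⟩
    exact (Set.finite_range _).subset hsub
  have hWfin : (wordSet T r).Finite := wordSet_finite hTfin r
  have hn : 0 < Nat.card A := Nat.card_pos
  -- orbits have cardinality ≤ Nat.card A
  have horb : ∀ x : G, Nat.card (orbitMap A x) ≤ Nat.card A := by
    intro x
    have : Function.Surjective (fun a : A => (⟨(a : MulAut G) x,
        ⟨a, a.2, rfl⟩⟩ : orbitMap A x)) := by
      rintro ⟨y, a, ha, hax⟩
      exact ⟨⟨a, ha⟩, Subtype.ext hax⟩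
    exact Nat.card_le_card_of_surjective _ this
  have horbfin : ∀ x : G, (orbitMap A x).Finite := by
    intro x
    have : orbitMap A x ⊆ Set.range (fun a : A => (a : MulAut G) x) := by
      rintro y ⟨a, ha, hax⟩; exact ⟨⟨a, ha⟩, hax⟩
    exact (Set.finite_range _).subset this
  -- finsets
  set hW : Set G := (fun w => h * w) '' wordSet T r with hhW
  have hhWfin : hW.Finite := hWfin.image _
  set s : Finset G := hhWfin.toFinset with hs
  have key : s.card ≤ Nat.card A * (s.image (orbitMap A)).card := by
    apply Finset.card_le_mul_card_image
    intro b hb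
    obtain ⟨x₀, hx₀s, hx₀⟩ := Finset.mem_image.mp hb
    have hsub : ↑{a ∈ s | orbitMap A a = b} ⊆ orbitMap A x₀ := by
      intro y hy
      simp only [Finset.coe_filter, Set.mem_setOf_eq] at hy
      have : y ∈ orbitMap A y := ⟨1, one_mem A, rfl⟩
      rw [hy.2, ← hx₀] at this
      exact this
    calc {a ∈ s | orbitMap A a = b}.card
        = Nat.card ↑({a ∈ s | orbitMap A a = b} : Finset G) := (Nat.card_eq_finsetCard _).symm
      _ ≤ Nat.card (orbitMap A x₀) := Nat.card_mono (horbfin x₀) hsub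
      _ ≤ Nat.card A := horb x₀
  -- identify cardinalities
  have himg : Nat.card (orbitMap A '' hW) = (s.image (orbitMap A)).card := by
    have heq : orbitMap A '' hW = ↑(s.image (orbitMap A)) := by
      rw [Finset.coe_image, Set.Finite.coe_toFinset]
    rw [heq, Nat.card_coe_set_eq, Set.ncard_coe_finset]
  have hWcard : Nat.card (wordSet T r) = s.card := by
    have h1 : Nat.card hW = s.card := by
      rw [Nat.card_coe_set_eq, Set.ncard_eq_toFinset_card hW hhWfin]
    rw [← h1, hhW, Nat.card_image_of_injective (mul_right_injective h)]
  have hsphere : Nat.card (monoidSphere T r) ≤ Nat.card (wordSet T r) :=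
    Nat.card_mono hWfin (sphere_subset_wordSet T r hr)
  -- real arithmetic
  have h1 : c * lam ^ r ≤ (Nat.card (monoidSphere T r) : ℝ) := hexp r hr
  have h2 : (Nat.card (monoidSphere T r) : ℝ) ≤
      (Nat.card A : ℝ) * (Nat.card (orbitMap A '' hW) : ℝ) := by
    push_cast [himg, hWcard] at *
    calc (Nat.card (monoidSphere T r) : ℝ) ≤ (s.card : ℝ) := by exact_mod_cast hsphere
      _ ≤ (Nat.card A : ℝ) * ((s.image (orbitMap A)).card : ℝ) := by exact_mod_cast key
  have hnR : (0 : ℝ) < (Nat.card A : ℝ) := by exact_mod_cast hn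
  rw [div_mul_eq_mul_div, div_le_iff₀ hnR]
  calc c * lam ^ r ≤ (Nat.card A : ℝ) * (Nat.card (orbitMap A '' hW) : ℝ) := h1.trans h2
    _ = (Nat.card (orbitMap A '' hW) : ℝ) * (Nat.card A : ℝ) := mul_comm _ _
end

section
/- Let X be a 2-valued group (n = 2) such that inv(a) = a for every a ∈ X, and let x ∈ X. Then for every integer k ≥ 2, the sphere S*(x, 2^k) contains at most one element. -/
/-- An `n`-valued group: multiplication takes values in `n`-element multisets. -/
structure NValuedGroup (n : ℕ) (X : Type*) where
  mul : X → X → Multiset X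
  e : X
  inv : X → X
  one_le : 1 ≤ n
  card_mul : ∀ x y, (mul x y).card = n
  assoc : ∀ x y z, (mul x y).bind (fun t => mul t z) = (mul y z).bind (fun t => mul x t)
  e_mul : ∀ x, mul e x = Multiset.replicate n x
  mul_e : ∀ x, mul x e = Multiset.replicate n x
  inv_mul : ∀ x, e ∈ mul (inv x) x
  mul_inv : ∀ x, e ∈ mul x (inv x)

variable {n : ℕ} {X : Type*}

/-- The multiset `x * s₁ * ⋯ * s_k` (iterated left-to-right, starting from `{x}`). -/
def NValuedGroup.wordProd (G : NValuedGroup n X) (x : X) (l : List X) : Multiset X :=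
  l.foldl (fun m s => m.bind (fun t => G.mul t s)) {x}

/-- The ball `B_S(x, r)`: elements lying in `Set(x * s₁ * ⋯ * s_m)` for some `m ≤ r`,
`s₁, …, s_m ∈ S`. -/
def NValuedGroup.ball (G : NValuedGroup n X) (S : Set X) (x : X) (r : ℕ) : Set X :=
  {y | ∃ l : List X, l.length ≤ r ∧ (∀ s ∈ l, s ∈ S) ∧ y ∈ G.wordProd x l}

/-- `S` generates `X`: every element lies in `Set(s₁ * ⋯ * s_m)` for some `m ≥ 1`,
`s₁, …, s_m ∈ S`. -/
def NValuedGroup.IsGenSet (G : NValuedGroup n X) (S : Set X) : Prop :=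
  ∀ x : X, ∃ s₀ ∈ S, ∃ l : List X, (∀ s ∈ l, s ∈ S) ∧ x ∈ G.wordProd s₀ l

/-- `G.spow x i` is the multivalued power `x^{*(i+1)}`; so `x^{*r} = G.spow x (r-1)` for `r ≥ 1`. -/
def NValuedGroup.spow (G : NValuedGroup n X) (x : X) : ℕ → Multiset X
  | 0 => {x}
  | r + 1 => (G.spow x r).bind (fun t => G.mul t x)

/-- `B*(x, r) = ⋃_{i=1}^{r} Set(x^{*i})`; in particular `B*(x, 0) = ∅`. -/
def NValuedGroup.Bstar (G : NValuedGroup n X) (x : X) (r : ℕ) : Set X :=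
  {y | ∃ i < r, y ∈ G.spow x i}

/-- `S*(x, r) = B*(x, r) \ B*(x, r-1)`. -/
def NValuedGroup.Sstar (G : NValuedGroup n X) (x : X) (r : ℕ) : Set X :=
  G.Bstar x r \ G.Bstar x (r - 1)

section aux

variable {n : ℕ} {X : Type*}

/-- `spow x (i+j+1)` is the bind of `spow x i` and `spow x j` under `mul`. -/
lemma NValuedGroup.spow_add (G : NValuedGroup n X) (x : X) (i j : ℕ) :
    G.spow x (i + j + 1) =
      (G.spow x i).bind (fun t => (G.spow x j).bind (fun u => G.mul t u)) := by
  induction j with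
  | zero =>
    simp [NValuedGroup.spow]
  | succ j ih =>
    have : i + (j + 1) + 1 = (i + j + 1) + 1 := by omega
    rw [this]
    show (G.spow x (i + j + 1)).bind (fun t => G.mul t x) = _
    rw [ih, Multiset.bind_assoc]
    congr 1
    funext t
    rw [Multiset.bind_assoc]
    show (G.spow x j).bind (fun u => (G.mul t u).bind (fun v => G.mul v x)) = _
    have hcong : (fun u => (G.mul t u).bind (fun v => G.mul v x))
        = (fun u => (G.mul u x).bind (fun w => G.mul t w)) := by
      funext u; exact G.assoc t u x
    rw [hcong]
    show _ = ((G.spow x j).bind fun t_1 => G.mul t_1 x).bind (fun u => G.mul t u)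
    rw [Multiset.bind_assoc]

lemma NValuedGroup.mem_spow_of_mul (G : NValuedGroup n X) {x t u y : X} {i j : ℕ}
    (ht : t ∈ G.spow x i) (hu : u ∈ G.spow x j) (hy : y ∈ G.mul t u) :
    y ∈ G.spow x (i + j + 1) := by
  rw [G.spow_add]
  exact Multiset.mem_bind.mpr ⟨t, ht, Multiset.mem_bind.mpr ⟨u, hu, hy⟩⟩

/-- In a card-2 multiset containing `e`, two non-`e` members coincide. -/
lemma card_two_aux {X : Type*} {M : Multiset X} {e y z : X} (hc : M.card = 2)
    (he : e ∈ M) (hy : y ∈ M) (hz : z ∈ M) (hye : y ≠ e) (hze : z ≠ e) : y = z := by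
  obtain ⟨M', rfl⟩ := Multiset.exists_cons_of_mem he
  have h1 : M'.card = 1 := by
    have := hc; rw [Multiset.card_cons] at this; omega
  obtain ⟨w, rfl⟩ := Multiset.card_eq_one.mp h1
  have hy' : y = w := by
    rcases Multiset.mem_cons.mp hy with h | h
    · exact absurd h hye
    · simpa using h
  have hz' : z = w := by
    rcases Multiset.mem_cons.mp hz with h | h
    · exact absurd h hze
    · simpa using h
  rw [hy', hz']

end aux

section key

variable {X : Type*}

lemma NValuedGroup.e_mem_mul_self (G : NValuedGroup 2 X)
    (hinv : ∀ a : X, G.inv a = a) (a : X) : G.e ∈ G.mul a a := by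
  have := G.inv_mul a
  rwa [hinv] at this

/-- Key doubling step. -/
lemma NValuedGroup.key (G : NValuedGroup 2 X) (hinv : ∀ a : X, G.inv a = a) (x : X)
    (m : ℕ) (hm : 2 ≤ m)
    (h : ∀ a ∈ G.Sstar x m, ∀ b ∈ G.Sstar x m, a ≠ G.e → b ≠ G.e → a = b) :
    (G.Sstar x (2 * m)).Subsingleton := by
  -- e is in the smaller ball
  have heB : G.e ∈ G.Bstar x (2 * m - 1) := by
    refine ⟨1, by omega, ?_⟩
    show G.e ∈ ({x} : Multiset X).bind (fun t => G.mul t x)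
    simpa using G.e_mem_mul_self hinv x
  -- main extraction: any element of the sphere lies in `mul s s` for some
  -- `s` in the sphere at `m` with `s ≠ e`.
  have extract : ∀ y ∈ G.Sstar x (2 * m), ∃ s, s ∈ G.Sstar x m ∧ s ≠ G.e ∧
      y ∈ G.mul s s ∧ y ≠ G.e := by
    rintro y ⟨⟨i, hi, hyi⟩, hy2⟩
    have hye : y ≠ G.e := fun h => hy2 (h ▸ heB)
    have hi' : i = 2 * m - 1 := by
      by_contra hne
      exact hy2 ⟨i, by omega, hyi⟩
    subst hi'
    have hrw : 2 * m - 1 = (m - 1) + (m - 1) + 1 := by omega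
    rw [hrw, G.spow_add] at hyi
    obtain ⟨t, ht, hy'⟩ := Multiset.mem_bind.mp hyi
    obtain ⟨u, hu, hyu⟩ := Multiset.mem_bind.mp hy'
    -- t ≠ e
    have hte : t ≠ G.e := by
      rintro rfl
      rw [G.e_mul] at hyu
      have : y = u := by
        have := Multiset.eq_of_mem_replicate hyu; exact this
      subst this
      exact hy2 ⟨m - 1, by omega, hu⟩
    have hue : u ≠ G.e := by
      rintro rfl
      rw [G.mul_e] at hyu
      have : y = t := Multiset.eq_of_mem_replicate hyu
      subst this
      exact hy2 ⟨m - 1, by omega, ht⟩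
    -- t ∈ Sstar x m
    have hts : t ∈ G.Sstar x m := by
      refine ⟨⟨m - 1, by omega, ht⟩, ?_⟩
      rintro ⟨j, hj, htj⟩
      have : y ∈ G.spow x (j + (m - 1) + 1) := G.mem_spow_of_mul htj hu hyu
      exact hy2 ⟨j + (m - 1) + 1, by omega, this⟩
    have hus : u ∈ G.Sstar x m := by
      refine ⟨⟨m - 1, by omega, hu⟩, ?_⟩
      rintro ⟨j, hj, huj⟩
      have : y ∈ G.spow x ((m - 1) + j + 1) := G.mem_spow_of_mul ht huj hyu
      exact hy2 ⟨(m - 1) + j + 1, by omega, this⟩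
    have htu : t = u := h t hts u hus hte hue
    subst htu
    exact ⟨t, hts, hte, hyu, hye⟩
  intro y hy z hz
  obtain ⟨s, hs, hse, hys, hye⟩ := extract y hy
  obtain ⟨s', hs', hse', hzs, hze⟩ := extract z hz
  have hss : s = s' := h s hs s' hs' hse hse'
  subst hss
  exact card_two_aux (G.card_mul s s) (G.e_mem_mul_self hinv s) hys hzs hye hze

/-- Base fact: the sphere at radius 2 has at most one non-`e` element. -/
lemma NValuedGroup.base (G : NValuedGroup 2 X) (hinv : ∀ a : X, G.inv a = a) (x : X) :
    ∀ a ∈ G.Sstar x 2, ∀ b ∈ G.Sstar x 2, a ≠ G.e → b ≠ G.e → a = b := by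
  have hxx : ∀ a ∈ G.Sstar x 2, a ∈ G.mul x x := by
    rintro a ⟨⟨i, hi, hai⟩, ha2⟩
    interval_cases i
    · exact absurd ⟨0, by omega, hai⟩ ha2
    · show a ∈ G.mul x x
      have : G.spow x 1 = ({x} : Multiset X).bind (fun t => G.mul t x) := rfl
      rw [this] at hai
      simpa using hai
  intro a ha b hb hae hbe
  exact card_two_aux (G.card_mul x x) (G.e_mem_mul_self hinv x) (hxx a ha) (hxx b hb) hae hbe

end key

/-- In a 2-valued group with `inv = id`, the sphere `S*(x, 2^k)` contains at most one
element for every `k ≥ 2`. -/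
theorem two_valued_sstar_pow_two_subsingleton (G : NValuedGroup 2 X)
    (hinv : ∀ a : X, G.inv a = a) (x : X) :
    ∀ k : ℕ, 2 ≤ k → (G.Sstar x (2 ^ k)).Subsingleton := by
  intro k hk
  induction k, hk using Nat.le_induction with
  | base =>
    have : (2 : ℕ) ^ 2 = 2 * 2 := by norm_num
    rw [this]
    exact G.key hinv x 2 le_rfl (G.base hinv x)
  | succ k hk ih =>
    have h2 : (2 : ℕ) ^ (k + 1) = 2 * 2 ^ k := by ring
    rw [h2]
    refine G.key hinv x (2 ^ k) ?_ ?_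
    · calc (2:ℕ) = 2 ^ 1 := by norm_num
        _ ≤ 2 ^ k := Nat.pow_le_pow_right (by norm_num) (by omega)
    · intro a ha b hb _ _
      exact ih ha hb
end

section
/- Let X be a 2-valued group (n = 2) such that inv(a) = a for every a ∈ X, and let x ∈ X. Then for every natural number r ≥ 1, the sphere S*(x, r) has cardinality strictly less than 2r. -/
variable {n : ℕ} {X : Type*}

/-! Every element is its own inverse, so `u * u = {e, w}` for some `w`, and associativity gives
`(p * u) * u = p * (u * u) = {p, p} + p * w`. Starting from `u₀ = x` and squaring, this shows
that for each `k` there is a `uₖ` such that every element of `S*(x, m + 1)` lies in `s * uₖ` for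
some `s ∈ S*(x, m - 2 ^ k + 1)`: the alternative `y = p` is excluded because `p` already occurs
in a lower power. Hence `|S*(x, m + 1)| ≤ 2 |S*(x, m - 2 ^ k + 1)|`, and removing the leading
binary digit `2 ^ k` of `m` gives `|S*(x, m + 1)| ≤ 2m + 1` by strong induction. -/

theorem Nat.le_two_mul_add_one_of_le_two_mul_sub_two_pow {f : ℕ → ℕ} (h₀ : f 0 ≤ 1)
    (hstep : ∀ k m, 2 ^ k ≤ m → f m ≤ 2 * f (m - 2 ^ k)) (m : ℕ) : f m ≤ 2 * m + 1 := by
  induction m using Nat.strong_induction_on with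
  | _ m ih =>
    rcases Nat.eq_zero_or_pos m with rfl | hm
    · exact h₀
    have hlo : 2 ^ Nat.log 2 m ≤ m := Nat.pow_log_le_self 2 hm.ne'
    have hhi : m < 2 * 2 ^ Nat.log 2 m := by
      rw [← pow_succ']; exact Nat.lt_pow_succ_log_self one_lt_two m
    have := ih (m - 2 ^ Nat.log 2 m) (by omega)
    have := hstep _ m hlo
    omega

namespace NValuedGroup

section

variable (G : NValuedGroup n X) (x : X)

theorem ncard_le_mul_ncard {A B : Set X} (hB : B.Finite) (u : X)
    (h : A ⊆ ⋃ s ∈ B, {y | y ∈ G.mul s u}) : A.ncard ≤ n * B.ncard := by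
  classical
  have hA : A ⊆ ↑(hB.toFinset.biUnion fun s => (G.mul s u).toFinset) := by
    simpa [Set.subset_def] using h
  calc A.ncard ≤ (hB.toFinset.biUnion fun s => (G.mul s u).toFinset).card :=
        (Set.ncard_le_ncard hA (Finset.finite_toSet _)).trans_eq (Set.ncard_coe_finset _)
    _ ≤ hB.toFinset.card * n :=
        Finset.card_biUnion_le_card_mul _ _ _ fun s _ =>
          (Multiset.toFinset_card_le _).trans (G.card_mul s u).le
    _ = n * B.ncard := by rw [Set.ncard_eq_toFinset_card _ hB, mul_comm]

theorem eq_or_mem_mul_of_mem_mul_mul {u w p s y : X}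
    (hu : G.mul u u = G.e ::ₘ {w}) (hs : s ∈ G.mul p u) (hy : y ∈ G.mul s u) :
    y = p ∨ y ∈ G.mul p w := by
  have : y ∈ (G.mul p u).bind (fun t => G.mul t u) := Multiset.mem_bind.mpr ⟨s, hs, hy⟩
  rw [G.assoc, hu, Multiset.cons_bind, Multiset.singleton_bind, G.mul_e] at this
  exact (Multiset.mem_add.mp this).imp_left Multiset.eq_of_mem_replicate

theorem mem_Sstar_succ {m : ℕ} {y : X} :
    y ∈ G.Sstar x (m + 1) ↔ y ∈ G.spow x m ∧ ∀ i < m, y ∉ G.spow x i := by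
  simp only [Sstar, Bstar, Set.mem_sdiff, Set.mem_ofPred_eq, Nat.add_sub_cancel, not_exists,
    not_and]
  constructor
  · rintro ⟨⟨i, hi, hy⟩, hnew⟩
    obtain rfl : i = m := by by_contra h; exact hnew i (by omega) hy
    exact ⟨hy, hnew⟩
  · exact fun ⟨hy, hnew⟩ => ⟨⟨m, m.lt_succ_self, hy⟩, hnew⟩

theorem Bstar_finite (r : ℕ) : (G.Bstar x r).Finite := by
  have : G.Bstar x r = ⋃ i ∈ Set.Iio r, {y | y ∈ G.spow x i} := by ext; simp [Bstar]
  rw [this]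
  exact (Set.finite_Iio r).biUnion fun i _ => (G.spow x i).finite_toSet

theorem Sstar_finite (r : ℕ) : (G.Sstar x r).Finite :=
  (G.Bstar_finite x r).subset Set.sdiff_subset

theorem ncard_Sstar_one : (G.Sstar x 1).ncard ≤ 1 := by
  have : G.Sstar x 1 ⊆ {x} := fun y hy => by
    simpa [spow] using ((G.mem_Sstar_succ x).mp hy).1
  simpa using Set.ncard_le_ncard this

theorem Sstar_succ_succ_subset (m : ℕ) :
    G.Sstar x (m + 2) ⊆ ⋃ s ∈ G.Sstar x (m + 1), {y | y ∈ G.mul s x} := by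
  intro y hy
  rw [mem_Sstar_succ] at hy
  obtain ⟨⟨s, hs, hys⟩, hnew⟩ := hy.imp_left Multiset.mem_bind.mp
  refine Set.mem_biUnion ((G.mem_Sstar_succ x).mpr ⟨hs, fun i hi hsi => ?_⟩) hys
  exact hnew (i + 1) (by omega) (Multiset.mem_bind.mpr ⟨s, hsi, hys⟩)

end

theorem exists_mul_self_eq_cons (G : NValuedGroup 2 X) {u : X} (hu : G.e ∈ G.mul u u) :
    ∃ w, G.mul u u = G.e ::ₘ {w} := by
  obtain ⟨s, hs⟩ := Multiset.exists_cons_of_mem hu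
  have hcard := G.card_mul u u
  rw [hs, Multiset.card_cons] at hcard
  obtain ⟨w, rfl⟩ := Multiset.card_eq_one.mp (by omega : Multiset.card s = 1)
  exact ⟨w, hs⟩

theorem exists_Sstar_subset_biUnion_mul (G : NValuedGroup 2 X) (hsq : ∀ a, G.e ∈ G.mul a a)
    (x : X) (k : ℕ) : ∃ u, ∀ m, 2 ^ k ≤ m →
      G.Sstar x (m + 1) ⊆ ⋃ s ∈ G.Sstar x (m - 2 ^ k + 1), {y | y ∈ G.mul s u} := by
  induction k with
  | zero =>
    refine ⟨x, fun m hm => ?_⟩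
    obtain ⟨m, rfl⟩ : ∃ m', m = m' + 1 := ⟨m - 1, by simp at hm; omega⟩
    simpa using G.Sstar_succ_succ_subset x m
  | succ k ih =>
    obtain ⟨u, hu⟩ := ih
    obtain ⟨w, hw⟩ := G.exists_mul_self_eq_cons (hsq u)
    refine ⟨w, fun m hm y hy => ?_⟩
    have hdouble : 2 ^ (k + 1) = 2 ^ k + 2 ^ k := by rw [pow_succ, mul_two]
    obtain ⟨s, hs, hys⟩ := Set.mem_iUnion₂.mp (hu m (by omega) hy)
    obtain ⟨p, hp, hsp⟩ := Set.mem_iUnion₂.mp (hu (m - 2 ^ k) (by omega) hs)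
    rw [Nat.sub_sub, ← hdouble] at hp
    refine Set.mem_biUnion hp ((G.eq_or_mem_mul_of_mem_mul_mul hw hsp hys).resolve_left ?_)
    rintro rfl
    have hlt : m - 2 ^ (k + 1) < m :=
      Nat.sub_lt ((Nat.two_pow_pos _).trans_le hm) (Nat.two_pow_pos _)
    exact ((G.mem_Sstar_succ x).mp hy).2 _ hlt ((G.mem_Sstar_succ x).mp hp).1

end NValuedGroup

/-- In a 2-valued group with `inv = id`, the sphere `S*(x, r)` has cardinality strictly
less than `2r` for every `r ≥ 1`. -/
theorem two_valued_sstar_card_lt (G : NValuedGroup 2 X)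
    (hinv : ∀ a : X, G.inv a = a) (x : X) :
    ∀ r : ℕ, 1 ≤ r → Nat.card (G.Sstar x r) < 2 * r := by
  intro r hr
  obtain ⟨m, rfl⟩ : ∃ m, r = m + 1 := ⟨r - 1, by omega⟩
  have hsq : ∀ a, G.e ∈ G.mul a a := fun a => by simpa [hinv] using G.inv_mul a
  have hbound : Nat.card (G.Sstar x (m + 1)) ≤ 2 * m + 1 := by
    refine Nat.le_two_mul_add_one_of_le_two_mul_sub_two_pow
      (f := fun j => (G.Sstar x (j + 1)).ncard) (G.ncard_Sstar_one x) (fun k j hkj => ?_) m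
    obtain ⟨u, hu⟩ := G.exists_Sstar_subset_biUnion_mul hsq x k
    exact G.ncard_le_mul_ncard (G.Sstar_finite x _) u (hu j hkj)
  omega
end
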